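/- arXiv:2103.11875 — 4 statements merged into one kernel-verified Lean document; each statement's English description precedes it below -/
import Mathlib

section
/- Let a₁ > 1 > a₂ > 0 and 0 < p < 1 be real numbers. Define φ(δ) = p·a₁^{-δ} + (1-p)·a₂^{-δ}. If (1-p)·ln(1/a₂) < p·ln(a₁), then the point δ₀ = -ln(-(1-p)/p · ln(a₂)/ln(a₁)) / ln(a₁/a₂) satisfies δ₀ > 0 and φ(δ₀) < 1. -/
/-!
Write `L₁ = log a₁ > 0 > L₂ = log a₂`, `t = L₁ / (L₁ - L₂) ∈ (0, 1)` and
`c = (1 - p) (-L₂) / (p L₁)`, so that `δ₀ = -log c / (L₁ - L₂)`; the balance condition says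
`c < 1`, hence `δ₀ > 0`. Moreover `a₁ ^ (-δ₀) = c ^ t` and `a₂ ^ (-δ₀) = c ^ (t - 1)`, and with
`u = (1 - p) / t`, `v = p / (1 - t)` one has `c = u / v` and
`φ δ₀ = u ^ t * v ^ (1 - t) < t u + (1 - t) v = 1` by the strict weighted AM-GM inequality,
strict because the balance condition rules out `t = 1 - p`, i.e. `u = v`.
-/

open Real

lemma rpow_log_div_comm {a c : ℝ} (ha : 0 < a) (hc : 0 < c) (D : ℝ) :
    a ^ (log c / D) = c ^ (log a / D) := by
  rw [rpow_def_of_pos ha, rpow_def_of_pos hc]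
  ring_nf

lemma mul_rpow_add_mul_rpow_sub_one_lt_one {p t c : ℝ} (hp0 : 0 < p) (hp1 : p < 1)
    (ht0 : 0 < t) (ht1 : t < 1) (htp : t ≠ 1 - p) (hc : c = (1 - p) * (1 - t) / (p * t)) :
    p * c ^ t + (1 - p) * c ^ (t - 1) < 1 := by
  set u := (1 - p) / t
  set v := p / (1 - t)
  have hu : 0 < u := div_pos (by linarith) ht0
  have hv : 0 < v := div_pos hp0 (by linarith)
  have hq_eq : 1 - p = t * u := by simp only [u]; field_simp
  have hp_eq : p = (1 - t) * v := by simp only [v]; field_simp [(sub_pos.2 ht1).ne']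
  replace hc : c = u / v := by rw [hc]; simp only [u, v]; field_simp
  have hsplit : p * c ^ t + (1 - p) * c ^ (t - 1) = u ^ t * v ^ (1 - t) := by
    rw [hc, rpow_sub_one (div_pos hu hv).ne', div_rpow hu.le hv.le, rpow_sub hv, rpow_one, hq_eq,
      hp_eq]
    field_simp
    ring
  have hamgm : u ^ t * v ^ (1 - t) < t * u + (1 - t) * v :=
    (geom_mean_lt_arith_mean2_weighted_iff_of_pos ht0 (by linarith) hu.le hv.le
      (by ring)).2 fun huv => htp ?_
  · calc p * c ^ t + (1 - p) * c ^ (t - 1) = u ^ t * v ^ (1 - t) := hsplit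
      _ < t * u + (1 - t) * v := hamgm
      _ = 1 := by linarith
  · rw [← huv] at hp_eq
    linear_combination (t - 1) * hq_eq + t * hp_eq

lemma mul_rpow_neg_add_mul_rpow_neg_eq_rpow {a₁ a₂ c : ℝ} (ha₁ : 0 < a₁) (ha₂ : 0 < a₂)
    (hc : 0 < c) (hD : log (a₁ / a₂) ≠ 0) (p : ℝ) :
    p * a₁ ^ (-(-log c / log (a₁ / a₂))) + (1 - p) * a₂ ^ (-(-log c / log (a₁ / a₂))) =
      p * c ^ (log a₁ / log (a₁ / a₂)) + (1 - p) * c ^ (log a₁ / log (a₁ / a₂) - 1) := by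
  rw [neg_div, neg_neg, rpow_log_div_comm ha₁ hc, rpow_log_div_comm ha₂ hc, div_sub_one hD,
    log_div ha₁.ne' ha₂.ne', sub_sub_cancel]

/-- Calculation 2.2 (second part): under the balance condition, the critical point
`δ₀` is positive and `φ δ₀ < 1`. -/
theorem stmt_0 (a₁ a₂ p : ℝ) (ha₁ : 1 < a₁) (ha₂0 : 0 < a₂) (ha₂1 : a₂ < 1)
    (hp0 : 0 < p) (hp1 : p < 1)
    (hbal : (1 - p) * Real.log (1 / a₂) < p * Real.log a₁) :
    let φ : ℝ → ℝ := fun δ => p * a₁ ^ (-δ) + (1 - p) * a₂ ^ (-δ)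
    let δ₀ : ℝ :=
      -Real.log (-(1 - p) / p * (Real.log a₂ / Real.log a₁)) / Real.log (a₁ / a₂)
    0 < δ₀ ∧ φ δ₀ < 1 := by
  intro φ δ₀
  have hL₁ : 0 < log a₁ := log_pos ha₁
  have hL₂ : log a₂ < 0 := log_neg ha₂0 ha₂1
  rw [one_div, log_inv] at hbal
  set D := log (a₁ / a₂)
  have hD_eq : D = log a₁ - log a₂ := log_div (by positivity) ha₂0.ne'
  have hD : 0 < D := by linarith
  set t := log a₁ / D
  have ht0 : 0 < t := div_pos hL₁ hD
  have ht1 : t < 1 := (div_lt_one hD).2 (by linarith)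
  have htp : t ≠ 1 - p := by
    rw [Ne, div_eq_iff hD.ne', hD_eq]
    intro h
    linarith
  set c := -(1 - p) / p * (log a₂ / log a₁)
  have hc0 : 0 < c := mul_pos_of_neg_of_neg (div_neg_of_neg_of_pos (by linarith) hp0)
    (div_neg_of_neg_of_pos hL₂ hL₁)
  have hc1 : c < 1 := by
    rw [show c = (1 - p) * -log a₂ / (p * log a₁) by simp only [c]; field_simp,
      div_lt_one (by positivity)]
    exact hbal
  have hc : c = (1 - p) * (1 - t) / (p * t) := by
    simp only [c, t, hD_eq]
    field_simp [hL₁.ne', (hD_eq ▸ hD.ne' : log a₁ - log a₂ ≠ 0)]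
    ring
  exact ⟨div_pos (neg_pos.2 (log_neg hc0 hc1)) hD,
    (mul_rpow_neg_add_mul_rpow_neg_eq_rpow (by linarith) ha₂0 hc0 hD.ne' p).trans_lt
      (mul_rpow_add_mul_rpow_sub_one_lt_one hp0 hp1 ht0 ht1 htp hc)⟩
end

section
/- Fix constants h, α, ζ, a₀ > 0 and a₁ > 1. For λ > 1 large enough so that 0 < a₂(λ) := a₀·λ^{-h} < 1 and 0 < p(λ) := 1 - ζ·λ^{-α} < 1 and the balance condition holds, define δ(λ) = -ln(-(1-p(λ))/p(λ) · ln(a₂(λ))/ln(a₁)) / ln(a₁/a₂(λ)). Then δ(λ) → α/h as λ → +∞. -/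
/-!
Put `u = -log a₂`. For `0 < a₂ < 1 < a₁` and `0 < p < 1`,
`δ₀(a₁, a₂; p) = (log (p / (1 - p)) - log u + log (log a₁)) / (u + log a₁)`,
so as `a₂ → 0⁺` (i.e. `u → ∞`, where `log u = o(u)`) the critical point behaves like
`log (p / (1 - p)) / u`. Along `a₂ = a₀ λ^(-h)`, `p = 1 - ζ λ^(-α)` the log-odds grow like
`α log λ` and `u` like `h log λ`, whence the limit `α / h`.
-/

open Filter Real Topology

theorem Filter.Tendsto.div_of_div_scale {ι : Type*} {l : Filter ι} {f g s : ι → ℝ} {a b : ℝ}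
    (hf : Tendsto (fun i => f i / s i) l (𝓝 a)) (hg : Tendsto (fun i => g i / s i) l (𝓝 b))
    (hb : b ≠ 0) (hs : ∀ᶠ i in l, s i ≠ 0) :
    Tendsto (fun i => f i / g i) l (𝓝 (a / b)) :=
  (hf.div hg hb).congr' (hs.mono fun _ hi => div_div_div_cancel_right₀ hi _ _)

theorem log_mul_rpow {c x : ℝ} (hc : c ≠ 0) (hx : 0 < x) (s : ℝ) :
    log (c * x ^ s) = log c + s * log x := by
  rw [log_mul hc (rpow_pos_of_pos hx s).ne', log_rpow hx]

theorem tendsto_const_mul_rpow_neg_nhdsGT_zero {c s : ℝ} (hc : 0 < c) (hs : 0 < s) :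
    Tendsto (fun x : ℝ => c * x ^ (-s)) atTop (𝓝[>] 0) := by
  refine tendsto_nhdsWithin_iff.mpr ⟨?_, ?_⟩
  · simpa using (tendsto_rpow_neg_atTop hs).const_mul c
  · filter_upwards [eventually_gt_atTop 0] with x hx
    exact mul_pos hc (rpow_pos_of_pos hx _)

theorem tendsto_neg_log_const_mul_rpow_neg_div_log {c : ℝ} (hc : c ≠ 0) (s : ℝ) :
    Tendsto (fun x : ℝ => -log (c * x ^ (-s)) / log x) atTop (𝓝 s) := by
  have hlim := (tendsto_const_nhds (x := -log c)).div_atTop tendsto_log_atTop |>.add_const s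
  rw [zero_add] at hlim
  refine hlim.congr' ?_
  filter_upwards [eventually_gt_atTop 1] with x hx
  have hlog : 0 < log x := log_pos hx
  rw [log_mul_rpow hc (by linarith)]
  field_simp
  ring

/-- `δ₀(a₁, a₂; p)`, the critical point of the calculus lemma. -/
noncomputable def criticalExponent (a₁ a₂ p : ℝ) : ℝ :=
  -Real.log (-(1 - p) / p * (Real.log a₂ / Real.log a₁)) / Real.log (a₁ / a₂)

theorem criticalExponent_eq {a₁ a₂ p : ℝ} (ha₁ : 1 < a₁) (ha₂ : 0 < a₂) (ha₂' : a₂ < 1)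
    (hp : 0 < p) (hp' : p < 1) :
    criticalExponent a₁ a₂ p =
      (log (p / (1 - p)) - log (-log a₂) + log (log a₁)) / (log a₁ - log a₂) := by
  have hlog₁ : 0 < log a₁ := log_pos ha₁
  have hlog₂ : 0 < -log a₂ := neg_pos.mpr (log_neg ha₂ ha₂')
  have hq : 0 < 1 - p := sub_pos.mpr hp'
  have hsign : -(1 - p) / p * (log a₂ / log a₁) = (1 - p) / p * (-log a₂ / log a₁) := by ring
  rw [criticalExponent, hsign, log_mul (by positivity) (by positivity), log_div hq.ne' hp.ne',
    log_div hlog₂.ne' hlog₁.ne', log_div hp.ne' hq.ne', log_div (by positivity) ha₂.ne']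
  ring

theorem tendsto_criticalExponent {ι : Type*} {l : Filter ι} {a₁ r : ℝ} {a₂ p : ι → ℝ}
    (ha₁ : 1 < a₁) (ha₂ : Tendsto a₂ l (𝓝[>] 0)) (hp : ∀ᶠ i in l, 0 < p i ∧ p i < 1)
    (hratio : Tendsto (fun i => log (p i / (1 - p i)) / -log (a₂ i)) l (𝓝 r)) :
    Tendsto (fun i => criticalExponent a₁ (a₂ i) (p i)) l (𝓝 r) := by
  set u := fun i => -log (a₂ i)
  have hu : Tendsto u l atTop := tendsto_neg_atBot_atTop.comp (tendsto_log_nhdsGT_zero.comp ha₂)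
  have hlogu : Tendsto (fun i => log (u i) / u i) l (𝓝 0) :=
    isLittleO_log_id_atTop.tendsto_div_nhds_zero.comp hu
  have hnum : Tendsto (fun i => (log (p i / (1 - p i)) - log (u i) + log (log a₁)) / u i) l
      (𝓝 (r - 0 + 0)) := by
    simp only [add_div, sub_div]
    exact (hratio.sub hlogu).add (tendsto_const_nhds.div_atTop hu)
  have hden : Tendsto (fun i => (log a₁ + u i) / u i) l (𝓝 1) := by
    have hlim := (tendsto_const_nhds (x := log a₁)).div_atTop hu |>.add_const 1
    rw [zero_add] at hlim
    refine hlim.congr' ?_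
    filter_upwards [hu.eventually_gt_atTop 0] with i hi
    rw [add_div, div_self hi.ne']
  have hlim := hnum.div_of_div_scale hden one_ne_zero (hu.eventually_ne_atTop 0)
  rw [sub_zero, add_zero, div_one] at hlim
  refine hlim.congr' ?_
  have ha₂_lt_one : ∀ᶠ i in l, a₂ i < 1 :=
    tendsto_nhdsWithin_iff.mp ha₂ |>.1.eventually (gt_mem_nhds one_pos)
  filter_upwards [hp, ha₂_lt_one, tendsto_nhdsWithin_iff.mp ha₂ |>.2] with i ⟨hp₀, hp₁⟩ ha₂₁ ha₂₀
  rw [criticalExponent_eq ha₁ ha₂₀ ha₂₁ hp₀ hp₁, sub_eq_add_neg (log a₁)]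

/-- Calculation 2.4 (second part): the critical exponent
`δ(λ) = δ₀(a₁, a₂(λ); p(λ))` tends to `α/h` as `λ → +∞`, where
`a₂(λ) = a₀·λ^(-h)` and `p(λ) = 1 - ζ·λ^(-α)`. -/
theorem stmt_3 (h α ζ a₀ a₁ : ℝ) (hh : 0 < h) (hα : 0 < α) (hζ : 0 < ζ)
    (ha₀ : 0 < a₀) (ha₁ : 1 < a₁) :
    Tendsto
      (fun lam : ℝ =>
        -Real.log
            (-(1 - (1 - ζ * lam ^ (-α))) / (1 - ζ * lam ^ (-α)) *
              (Real.log (a₀ * lam ^ (-h)) / Real.log a₁)) /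
          Real.log (a₁ / (a₀ * lam ^ (-h))))
      atTop (nhds (α / h)) := by
  have hq := tendsto_const_mul_rpow_neg_nhdsGT_zero hζ hα
  obtain ⟨hq_zero, hq_pos⟩ := tendsto_nhdsWithin_iff.mp hq
  have hp : ∀ᶠ lam in atTop, 0 < 1 - ζ * lam ^ (-α) ∧ 1 - ζ * lam ^ (-α) < 1 := by
    filter_upwards [hq_zero.eventually (gt_mem_nhds one_pos), hq_pos] with lam h₁ h₀
    rw [Set.mem_Ioi] at h₀
    constructor <;> linarith
  have hlog_p : Tendsto (fun lam : ℝ => log (1 - ζ * lam ^ (-α))) atTop (𝓝 0) := by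
    have hp_one := hq_zero.const_sub 1
    rw [sub_zero] at hp_one
    simpa [Function.comp_def] using (continuousAt_log one_ne_zero).tendsto.comp hp_one
  have hodds : Tendsto (fun lam : ℝ =>
      log ((1 - ζ * lam ^ (-α)) / (1 - (1 - ζ * lam ^ (-α)))) / log lam) atTop (𝓝 α) := by
    have hlim := (hlog_p.div_atTop tendsto_log_atTop).add
      (tendsto_neg_log_const_mul_rpow_neg_div_log hζ.ne' α)
    rw [zero_add] at hlim
    refine hlim.congr' ?_
    filter_upwards [hp, hq_pos] with lam ⟨hp₀, _⟩ hq₀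
    rw [sub_sub_cancel, log_div hp₀.ne' (ne_of_gt hq₀)]
    ring
  exact tendsto_criticalExponent ha₁ (tendsto_const_mul_rpow_neg_nhdsGT_zero ha₀ hh) hp
    (hodds.div_of_div_scale (tendsto_neg_log_const_mul_rpow_neg_div_log ha₀.ne' h) hh.ne'
      (tendsto_log_atTop.eventually_ne_atTop 0))
end

section
/- Let T be a real torus (compact connected abelian Lie group) with Lie algebra 𝔱, let Ω be a finite set of ℝ-linear functionals ω : 𝔱 → ℂ, and let c_ω ∈ ℂ be coefficients. Suppose ζ(exp X) = Σ_{ω∈Ω} c_ω e^{ω(X)} defines a function on T (i.e., the expression is well-defined on T). If ζ is not identically zero on T, then the order of vanishing of ζ at any point of T is strictly less than |Ω|; equivalently, at every t₀ ∈ T some partial derivative of ζ of total order < |Ω| is nonzero at t₀. -/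
/-!
Restricting `ζ` to the line `t ↦ X₀ + t • Y` gives the exponential polynomial
`t ↦ Σ_ω c_ω e^{ω X₀} e^{t ω(Y)}`, whose `l`-th derivative at `0` is `Σ_ω c_ω e^{ω X₀} ω(Y)^l`.
Choose `Y` outside the finitely many proper subspaces `ker (ω₁ - ω₂)`, so that the nodes `ω(Y)`
are distinct. If these derivatives vanished for all `l < |Ω|`, the invertibility of the
Vandermonde matrix of the nodes would force every `c_ω` to vanish, and then `ζ ≡ 0`.
-/

open Finset Polynomial

theorem LinearMap.exists_injOn_apply {K V W : Type*} [Field K] [Infinite K]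
    [AddCommGroup V] [Module K V] [AddCommGroup W] [Module K W] (s : Finset (V →ₗ[K] W)) :
    ∃ v : V, Set.InjOn (fun f : V →ₗ[K] W => f v) s := by
  let ι := {p : s × s // p.1 ≠ p.2}
  have hcover :
      ⋃ p : ι, (ker ((p.1.1 : V →ₗ[K] W) - (p.1.2 : V →ₗ[K] W)) : Set V) ≠ Set.univ := by
    intro h
    obtain ⟨⟨⟨f, g⟩, hfg⟩, htop⟩ := Subspace.exists_eq_top_of_iUnion_eq_univ h
    exact hfg (Subtype.ext (sub_eq_zero.mp (ker_eq_top.mp htop)))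
  obtain ⟨v, hv⟩ := (Set.ne_univ_iff_exists_notMem _).mp hcover
  refine ⟨v, fun f hf g hg hfgv => by_contra fun hfg => hv ?_⟩
  refine Set.mem_iUnion.mpr ⟨⟨(⟨f, hf⟩, ⟨g, hg⟩), fun h => hfg (congrArg Subtype.val h)⟩, ?_⟩
  simpa [sub_eq_zero] using hfgv

section Vandermonde

variable {F ι : Type*} [Field F] {s : Finset ι} {a z : ι → F}

theorem sum_mul_eval_eq_zero_of_sum_mul_pow_eq_zero {n : ℕ}
    (h : ∀ l < n, ∑ i ∈ s, a i * z i ^ l = 0) {p : F[X]} (hp : p.natDegree < n) :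
    ∑ i ∈ s, a i * p.eval (z i) = 0 := by
  calc ∑ i ∈ s, a i * p.eval (z i)
      = ∑ l ∈ range n, p.coeff l * ∑ i ∈ s, a i * z i ^ l := by
        simp only [eval_eq_sum_range' hp, mul_sum, sum_comm (s := s)]
        exact sum_congr rfl fun _ _ => sum_congr rfl fun _ _ => by ring
    _ = 0 := sum_eq_zero fun l hl => by rw [h l (mem_range.mp hl), mul_zero]

theorem eq_zero_of_sum_mul_pow_eq_zero (hz : Set.InjOn z s)
    (h : ∀ l < s.card, ∑ i ∈ s, a i * z i ^ l = 0) {i : ι} (hi : i ∈ s) : a i = 0 := by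
  classical
  have hdeg : (Lagrange.basis s z i).natDegree < s.card := by
    rw [Lagrange.natDegree_basis hz hi]
    exact Nat.sub_lt (card_pos.mpr ⟨i, hi⟩) one_pos
  -- the Lagrange basis polynomial at `i` evaluates to the indicator of `i` on the nodes
  calc a i = ∑ j ∈ s, a j * (Lagrange.basis s z i).eval (z j) := by
        rw [sum_eq_single_of_mem i hi fun j hj hji => by
          rw [Lagrange.eval_basis_of_ne hji.symm hj, mul_zero]]
        rw [Lagrange.eval_basis_self hz hi, mul_one]
    _ = 0 := sum_mul_eval_eq_zero_of_sum_mul_pow_eq_zero h hdeg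

end Vandermonde

theorem iteratedDeriv_cexp_ofReal_mul (n : ℕ) (z : ℂ) :
    iteratedDeriv n (fun t : ℝ => Complex.exp (t * z)) = fun t : ℝ => z ^ n * Complex.exp (t * z) := by
  induction n with
  | zero => simp
  | succ n ih =>
    rw [iteratedDeriv_succ, ih]
    funext t
    have hexp : HasDerivAt (fun t : ℝ => Complex.exp (t * z)) (Complex.exp (t * z) * z) t := by
      simpa using ((hasDerivAt_id (t : ℂ)).mul_const z).cexp.comp_ofReal
    rw [(hexp.const_mul (z ^ n)).deriv]
    ring

theorem iteratedDeriv_sum_mul_cexp_ofReal_mul {ι : Type*} (s : Finset ι) (a z : ι → ℂ)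
    (n : ℕ) (t : ℝ) :
    iteratedDeriv n (fun t : ℝ => ∑ i ∈ s, a i * Complex.exp (t * z i)) t =
      ∑ i ∈ s, a i * (z i ^ n * Complex.exp (t * z i)) := by
  have hsmooth (i : ι) : ContDiff ℝ n fun t : ℝ => a i * Complex.exp (t * z i) :=
    contDiff_const.mul (Complex.ofRealCLM.contDiff.mul contDiff_const).cexp
  rw [← Finset.sum_fn, iteratedDeriv_sum fun i _ => (hsmooth i).contDiffAt]
  refine sum_congr rfl fun i _ => ?_
  rw [iteratedDeriv_const_mul_field, iteratedDeriv_cexp_ofReal_mul]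

/-- Lemma 3.4 (order bound for exponential sums on a torus, pulled back to the Lie
algebra `𝔱` via the exponential map): if `ζ(exp X) = Σ_{ω ∈ Ω} c_ω e^{ω(X)}` is not
identically zero, then at every point `X₀` the order of vanishing of `ζ` is less
than `|Ω|`; i.e. some directional derivative of order `l < |Ω|` is nonzero at `X₀`. -/
theorem stmt_7 (E : Type*) [NormedAddCommGroup E] [NormedSpace ℝ E]
    (Ω : Finset (E →ₗ[ℝ] ℂ)) (c : (E →ₗ[ℝ] ℂ) → ℂ)
    (ζ : E → ℂ)
    (hζ : ∀ X : E, ζ X = ∑ ω ∈ Ω, c ω * Complex.exp (ω X))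
    (hne : ∃ X : E, ζ X ≠ 0) (X₀ : E) :
    ∃ (Y : E) (l : ℕ), l < Ω.card ∧
      iteratedDeriv l (fun t : ℝ => ζ (X₀ + t • Y)) 0 ≠ 0 := by
  obtain ⟨Y, hY⟩ := LinearMap.exists_injOn_apply Ω
  by_contra! hvanish
  have hline : (fun t : ℝ => ζ (X₀ + t • Y)) =
      fun t : ℝ => ∑ ω ∈ Ω, c ω * Complex.exp (ω X₀) * Complex.exp (t * ω Y) := by
    funext t
    simp only [hζ, map_add, map_smul, Complex.real_smul, Complex.exp_add, mul_assoc]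
  have hmoments : ∀ l < Ω.card, ∑ ω ∈ Ω, c ω * Complex.exp (ω X₀) * ω Y ^ l = 0 := by
    intro l hl
    simpa [hline, iteratedDeriv_sum_mul_cexp_ofReal_mul] using hvanish Y l hl
  obtain ⟨X, hX⟩ := hne
  refine hX ((hζ X).trans (sum_eq_zero fun ω hω => ?_))
  have hcoeff := eq_zero_of_sum_mul_pow_eq_zero hY hmoments hω
  rw [(mul_eq_zero.mp hcoeff).resolve_right (Complex.exp_ne_zero _), zero_mul]
end

section
/- Let G act on a topological space Z, μ a probability measure on G, and f : Z → (0,∞) continuous. Suppose there exist a₁ > 1 > a₂ > 0, 0 < p < 1 satisfying (1-p)·ln(1/a₂) < p·ln(a₁), and ρ₀ > 0 such that: (1) for every z with f(z) < ρ₀, μ({g : f(gz) ≥ a₁·f(z)}) ≥ p; and (2) for every z, f(gz) ≥ a₂·f(z) for μ-almost every g. Then, with δ = δ₀(a₁,a₂;p) the critical exponent, the constants c = p·a₁^{-δ} + (1-p)·a₂^{-δ} ∈ (0,1) and b = (a₂·ρ₀)^{-δ} > 0 satisfy ∫_G f(gz)^{-δ} dμ(g) ≤ c·f(z)^{-δ}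 + b for every z ∈ Z. -/
/-!
At `δ = δ₀` the convex function `φ(δ) = p a₁^{-δ} + (1-p) a₂^{-δ}` has a critical point, and
`φ(0) = 1`; strict convexity (the tangent-line bound `1 + x < eˣ` for each exponential) gives
`c = φ(δ₀) < 1`. Pointwise, where `f z < ρ₀` the integrand `f(gz)^{-δ}` is at most
`(a₁ f z)^{-δ}` with probability at least `p` and at most `(a₂ f z)^{-δ}` almost surely, so
Markov's inequality bounds its mean by `c f(z)^{-δ}`; where `f z ≥ ρ₀` it is at most
`(a₂ ρ₀)^{-δ} = b` almost surely.
-/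

open MeasureTheory Real

/-- The exponent `δ₀(a₁,a₂;p)`: the critical point of `δ ↦ p a₁^{-δ} + (1-p) a₂^{-δ}`. -/
noncomputable def critExponent (a₁ a₂ p : ℝ) : ℝ :=
  -log (-(1 - p) / p * (log a₂ / log a₁)) / log (a₁ / a₂)

theorem rpow_neg_mul_one_add_mul_log_lt_one {a δ : ℝ} (ha : 0 < a) (h : δ * log a ≠ 0) :
    a ^ (-δ) * (1 + δ * log a) < 1 :=
  calc a ^ (-δ) * (1 + δ * log a) < exp (log a * -δ) * exp (δ * log a) := by
        rw [rpow_def_of_pos ha]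
        gcongr
        linarith [add_one_lt_exp h]
    _ = 1 := by rw [← exp_add, ← exp_zero]; ring_nf

section CritExponent

variable {a₁ a₂ p : ℝ}

theorem critExponent_pos (ha₁ : 1 < a₁) (ha₂0 : 0 < a₂) (ha₂1 : a₂ < 1) (hp0 : 0 < p)
    (hp1 : p < 1) (hbal : (1 - p) * log (1 / a₂) < p * log a₁) :
    0 < critExponent a₁ a₂ p := by
  have hL₁ : 0 < log a₁ := log_pos ha₁
  have hL₂ : log a₂ < 0 := log_neg ha₂0 ha₂1
  rw [one_div, log_inv] at hbal
  have hr : -(1 - p) / p * (log a₂ / log a₁) = (1 - p) * -log a₂ / (p * log a₁) := by ring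
  have hr1 : (1 - p) * -log a₂ / (p * log a₁) < 1 := by
    rwa [div_lt_one (by positivity)]
  have hr0 : 0 < (1 - p) * -log a₂ / (p * log a₁) :=
    div_pos (mul_pos (by linarith) (by linarith)) (by positivity)
  rw [critExponent, hr, log_div (by positivity) ha₂0.ne']
  exact div_pos (neg_pos.2 (log_neg hr0 hr1)) (by linarith)

theorem critExponent_isCritical (ha₁ : 1 < a₁) (ha₂0 : 0 < a₂) (ha₂1 : a₂ < 1) (hp0 : 0 < p)
    (hp1 : p < 1) :
    p * a₁ ^ (-critExponent a₁ a₂ p) * log a₁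
      + (1 - p) * a₂ ^ (-critExponent a₁ a₂ p) * log a₂ = 0 := by
  have hL₁ : 0 < log a₁ := log_pos ha₁
  have hL₂ : log a₂ < 0 := log_neg ha₂0 ha₂1
  set r := -(1 - p) / p * (log a₂ / log a₁) with hr
  have hr0 : 0 < r := by
    rw [hr, show -(1 - p) / p * (log a₂ / log a₁) = (1 - p) * -log a₂ / (p * log a₁) by ring]
    exact div_pos (mul_pos (by linarith) (by linarith)) (by positivity)
  have hlog : log (a₁ / a₂) ≠ 0 :=
    (log_pos ((one_lt_div ha₂0).2 (by linarith))).ne'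
  have hratio : (a₁ / a₂) ^ (-critExponent a₁ a₂ p) = r := by
    rw [rpow_def_of_pos (by positivity), critExponent, ← hr, mul_neg, mul_div_cancel₀ _ hlog,
      neg_neg, exp_log hr0]
  rw [div_rpow (by positivity) ha₂0.le, div_eq_iff (by positivity)] at hratio
  rw [hratio, hr]
  field_simp
  ring

theorem weighted_rpow_neg_critExponent_lt_one (ha₁ : 1 < a₁) (ha₂0 : 0 < a₂) (ha₂1 : a₂ < 1)
    (hp0 : 0 < p) (hp1 : p < 1) (hbal : (1 - p) * log (1 / a₂) < p * log a₁) :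
    p * a₁ ^ (-critExponent a₁ a₂ p) + (1 - p) * a₂ ^ (-critExponent a₁ a₂ p) < 1 := by
  set δ := critExponent a₁ a₂ p
  have hδ : 0 < δ := critExponent_pos ha₁ ha₂0 ha₂1 hp0 hp1 hbal
  have h₁ := rpow_neg_mul_one_add_mul_log_lt_one (a := a₁) (δ := δ) (by linarith)
    (mul_ne_zero hδ.ne' (log_pos ha₁).ne')
  have h₂ := rpow_neg_mul_one_add_mul_log_lt_one (δ := δ) ha₂0
    (mul_ne_zero hδ.ne' (log_neg ha₂0 ha₂1).ne)
  have hcrit := critExponent_isCritical ha₁ ha₂0 ha₂1 hp0 hp1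
  have hp1' : 0 < 1 - p := by linarith
  nlinarith [mul_lt_mul_of_pos_left h₁ hp0, mul_lt_mul_of_pos_left h₂ hp1']

end CritExponent

section Averaging

variable {α : Type*} [MeasurableSpace α] {μ : Measure α} [IsProbabilityMeasure μ]

theorem integral_le_of_ae_le_of_measure_setOf_le {F : α → ℝ} {T T' p : ℝ}
    (hF : Integrable F μ) (hFT' : ∀ᵐ x ∂μ, F x ≤ T') (hTT' : T ≤ T')
    (hp : ENNReal.ofReal p ≤ μ {x | F x ≤ T}) :
    ∫ x, F x ∂μ ≤ p * T + (1 - p) * T' := by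
  have hmarkov := mul_meas_ge_le_integral_of_nonneg (μ := μ) (f := fun x => T' - F x)
    (by filter_upwards [hFT'] with x hx; simpa using hx) ((integrable_const T').sub hF) (T' - T)
  have hset : {x | T' - T ≤ T' - F x} = {x | F x ≤ T} := by
    simp only [sub_le_sub_iff_left]
  rw [hset, integral_sub (integrable_const _) hF, integral_const, probReal_univ, one_smul]
    at hmarkov
  have hpm : p ≤ μ.real {x | F x ≤ T} :=
    (ENNReal.ofReal_le_iff_le_toReal (measure_ne_top _ _)).1 hp
  nlinarith

variable {φ : α → ℝ} {δ : ℝ}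

theorem integral_rpow_neg_le_of_ae_le {m : ℝ} (hm : 0 < m) (hδ : 0 ≤ δ)
    (hφ : ∀ᵐ x ∂μ, m ≤ φ x) : ∫ x, φ x ^ (-δ) ∂μ ≤ m ^ (-δ) := by
  calc ∫ x, φ x ^ (-δ) ∂μ ≤ ∫ _, m ^ (-δ) ∂μ := by
        refine integral_mono_of_nonneg ?_ (integrable_const _) ?_ <;>
          filter_upwards [hφ] with x hx
        · exact rpow_nonneg (hm.le.trans hx) _
        · exact rpow_le_rpow_of_nonpos hm hx (by linarith)
    _ = m ^ (-δ) := by simp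

theorem integral_rpow_neg_le_of_expansion {x a₁ a₂ p : ℝ} (hx : 0 < x) (ha₂ : 0 < a₂)
    (ha : a₂ ≤ a₁) (hδ : 0 ≤ δ) (hp0 : 0 ≤ p) (hp1 : p ≤ 1)
    (hexp : ENNReal.ofReal p ≤ μ {g | a₁ * x ≤ φ g}) (hlow : ∀ᵐ g ∂μ, a₂ * x ≤ φ g) :
    ∫ g, φ g ^ (-δ) ∂μ ≤ (p * a₁ ^ (-δ) + (1 - p) * a₂ ^ (-δ)) * x ^ (-δ) := by
  have ha₁ : 0 < a₁ := ha₂.trans_le ha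
  by_cases hI : Integrable (fun g => φ g ^ (-δ)) μ
  · have hT : (a₁ * x) ^ (-δ) ≤ (a₂ * x) ^ (-δ) :=
      rpow_le_rpow_of_nonpos (by positivity) (by gcongr) (by linarith)
    have hset : {g | a₁ * x ≤ φ g} ⊆ {g | φ g ^ (-δ) ≤ (a₁ * x) ^ (-δ)} := fun g hg =>
      rpow_le_rpow_of_nonpos (by positivity) hg (by linarith)
    have hlow' : ∀ᵐ g ∂μ, φ g ^ (-δ) ≤ (a₂ * x) ^ (-δ) := by
      filter_upwards [hlow] with g hg
      exact rpow_le_rpow_of_nonpos (by positivity) hg (by linarith)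
    calc ∫ g, φ g ^ (-δ) ∂μ ≤ p * (a₁ * x) ^ (-δ) + (1 - p) * (a₂ * x) ^ (-δ) :=
          integral_le_of_ae_le_of_measure_setOf_le hI hlow' hT (hexp.trans (measure_mono hset))
      _ = _ := by rw [mul_rpow ha₁.le hx.le, mul_rpow ha₂.le hx.le]; ring
  · rw [integral_undef hI]
    have : 0 ≤ 1 - p := by linarith
    positivity

end Averaging

theorem stmt_11_general
    (G : Type*) [Group G] [MeasurableSpace G]
    (Z : Type*) [MulAction G Z]
    (μ : Measure G) [IsProbabilityMeasure μ]
    (f : Z → ℝ) (hfpos : ∀ z, 0 < f z)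
    (a₁ a₂ p ρ₀ : ℝ) (ha₁ : 1 < a₁) (ha₂0 : 0 < a₂) (ha₂1 : a₂ < 1)
    (hp0 : 0 < p) (hp1 : p < 1) (hρ₀ : 0 < ρ₀)
    (hbal : (1 - p) * Real.log (1 / a₂) < p * Real.log a₁)
    (hexp : ∀ z : Z, f z < ρ₀ →
      ENNReal.ofReal p ≤ μ {g : G | a₁ * f z ≤ f (g • z)})
    (hlow : ∀ z : Z, ∀ᵐ g ∂μ, a₂ * f z ≤ f (g • z)) :
    let δ : ℝ :=
      -Real.log (-(1 - p) / p * (Real.log a₂ / Real.log a₁)) / Real.log (a₁ / a₂)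
    let c : ℝ := p * a₁ ^ (-δ) + (1 - p) * a₂ ^ (-δ)
    let b : ℝ := (a₂ * ρ₀) ^ (-δ)
    0 < c ∧ c < 1 ∧ 0 < b ∧
      ∀ z : Z, ∫ g, (f (g • z)) ^ (-δ) ∂μ ≤ c * (f z) ^ (-δ) + b := by
  intro δ c b
  have hδ : 0 < δ := critExponent_pos ha₁ ha₂0 ha₂1 hp0 hp1 hbal
  have hp1' : 0 < 1 - p := by linarith
  have hc : 0 < c := by positivity
  refine ⟨hc, weighted_rpow_neg_critExponent_lt_one ha₁ ha₂0 ha₂1 hp0 hp1 hbal, by positivity,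
    fun z => ?_⟩
  have hfz := hfpos z
  rcases lt_or_ge (f z) ρ₀ with hz | hz
  · calc ∫ g, f (g • z) ^ (-δ) ∂μ ≤ c * f z ^ (-δ) :=
          integral_rpow_neg_le_of_expansion hfz ha₂0 (by linarith) hδ.le hp0.le hp1.le
            (hexp z hz) (hlow z)
      _ ≤ c * f z ^ (-δ) + b := le_add_of_nonneg_right (by positivity)
  · calc ∫ g, f (g • z) ^ (-δ) ∂μ ≤ b :=
          integral_rpow_neg_le_of_ae_le (by positivity) hδ.le <| by
            filter_upwards [hlow z] with g hg
            exact (mul_le_mul_of_nonneg_left hz ha₂0.le).trans hg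
      _ ≤ c * f z ^ (-δ) + b := le_add_of_nonneg_left (by positivity)

/-- Proposition 2.3 (from expansion to contraction): if `f` is expanded by factor
`a₁` with probability at least `p` wherever `f < ρ₀`, and is never contracted by
more than the factor `a₂` (μ-a.s.), then with `δ = δ₀(a₁,a₂;p)` the function
`f^{-δ}` satisfies `A_μ f^{-δ} ≤ c·f^{-δ} + b` with
`c = p·a₁^{-δ} + (1-p)·a₂^{-δ} ∈ (0,1)` and `b = (a₂·ρ₀)^{-δ} > 0`. -/
theorem stmt_11
    (G : Type*) [Group G] [MeasurableSpace G]
    (Z : Type*) [TopologicalSpace Z] [MulAction G Z]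
    (μ : Measure G) [IsProbabilityMeasure μ]
    (f : Z → ℝ) (hfcont : Continuous f) (hfpos : ∀ z, 0 < f z)
    (a₁ a₂ p ρ₀ : ℝ) (ha₁ : 1 < a₁) (ha₂0 : 0 < a₂) (ha₂1 : a₂ < 1)
    (hp0 : 0 < p) (hp1 : p < 1) (hρ₀ : 0 < ρ₀)
    (hbal : (1 - p) * Real.log (1 / a₂) < p * Real.log a₁)
    (hexp : ∀ z : Z, f z < ρ₀ →
      ENNReal.ofReal p ≤ μ {g : G | a₁ * f z ≤ f (g • z)})
    (hlow : ∀ z : Z, ∀ᵐ g ∂μ, a₂ * f z ≤ f (g • z)) :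
    let δ : ℝ :=
      -Real.log (-(1 - p) / p * (Real.log a₂ / Real.log a₁)) / Real.log (a₁ / a₂)
    let c : ℝ := p * a₁ ^ (-δ) + (1 - p) * a₂ ^ (-δ)
    let b : ℝ := (a₂ * ρ₀) ^ (-δ)
    0 < c ∧ c < 1 ∧ 0 < b ∧
      ∀ z : Z, ∫ g, (f (g • z)) ^ (-δ) ∂μ ≤ c * (f z) ^ (-δ) + b :=
  stmt_11_general G Z μ f hfpos a₁ a₂ p ρ₀ ha₁ ha₂0 ha₂1 hp0 hp1 hρ₀ hbal hexp hlow
end
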